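/- Let v_1, …, v_k be distinct points in ℝ^d whose convex hull S has nonempty interior and such that each v_i is an extreme point of S (so S is a convex polytope with exactly the k vertices v_1, …, v_k). Then for every Δ > 0 there exists δ > 0 such that for every choice of points w_1, …, w_k ∈ ℝ^d, if the convex hull T of {w_1, …, w_k} satisfies λ(T Δ S) ≤ δ, then there is a permutation ρ of {1,…,k} with ‖w_{ρ(i)} − v_i‖ ≤ Δ for all i. -/

import Mathlib

/-!
If the claim failed for some `Δ`, there would be configurations `w n` whose hulls `Tₙ` satisfy
`λ(Tₙ ∆ S) → 0` while no relabelling of `w n` is `Δ`-close to `v`. A point of `Tₙ` at distance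
`ε` from `S` (or a point of `S` at distance `ε` from `Tₙ`) is the centre of a homothety, with ratio
depending only on `ε` and `diam S`, mapping a fixed proportion of `S` into `Tₙ \ S`
(resp. `S \ Tₙ`). Hence `Tₙ → S` in the Hausdorff sense, so the `w n` stay bounded, a subsequence
converges to some `u`, and `conv u = S`. Each `v i` is an extreme point of `conv u`, hence equal to
some `u j`, and injectivity of `v` turns this into a permutation.
-/

open MeasureTheory Metric Set Filter Topology AffineMap Module
open scoped symmDiff

theorem subset_closure_of_forall_subset_cthickening {X : Type*} [PseudoMetricSpace X]
    {A B : Set X} (h : ∀ ε > 0, A ⊆ cthickening ε B) : A ⊆ closure B := by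
  rw [closure_eq_iInter_cthickening]
  exact subset_iInter₂ h

theorem convexHull_range_subset_cthickening {E ι : Type*} [SeminormedAddCommGroup E]
    [NormedSpace ℝ E] {u w : ι → E} {ε : ℝ} (h : ∀ j, dist (w j) (u j) ≤ ε) :
    convexHull ℝ (range w) ⊆ cthickening ε (convexHull ℝ (range u)) :=
  convexHull_min
    (range_subset_iff.2 fun j =>
      mem_cthickening_of_dist_le _ _ _ _ (subset_convexHull ℝ _ (mem_range_self j)) (h j))
    ((convex_convexHull ℝ _).cthickening ε)

section

variable {E : Type*} [NormedAddCommGroup E] [NormedSpace ℝ E] [MeasurableSpace E] [BorelSpace E]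
  [FiniteDimensional ℝ E] (μ : Measure E) [μ.IsAddHaarMeasure]

theorem Convex.ofReal_pow_mul_measure_le_measure_diff {C A F : Set E} {p : E} {τ : ℝ}
    (hC : Convex ℝ C) (hp : p ∈ C) (hAC : A ⊆ C) (hτ : τ ∈ Icc (0 : ℝ) 1)
    (hF : ∀ x ∈ A, homothety p τ x ∉ F) :
    ENNReal.ofReal (τ ^ finrank ℝ E) * μ A ≤ μ (C \ F) := by
  rw [← abs_of_nonneg (pow_nonneg hτ.1 _), ← Measure.addHaar_image_homothety]
  refine measure_mono ?_
  rintro _ ⟨x, hx, rfl⟩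
  exact ⟨homothety_eq_lineMap p τ x ▸ hC.lineMap_mem hp (hAC hx) hτ, hF x hx⟩

theorem Convex.ofReal_pow_mul_measure_inter_le_of_forall_le_dist {S T : Set E} {p : E} {ε τ : ℝ}
    (hT : Convex ℝ T) (hpT : p ∈ T) (hpS : ∀ s ∈ S, ε ≤ dist p s) (hSb : Bornology.IsBounded S)
    (hτ₀ : 0 ≤ τ) (hτ : τ ≤ 1 / 2) (hτS : τ * diam S < ε / 2) :
    ENNReal.ofReal (τ ^ finrank ℝ E) * μ (S ∩ T) ≤ μ (T \ S) := by
  refine hT.ofReal_pow_mul_measure_le_measure_diff μ hpT inter_subset_right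
    ⟨hτ₀, by linarith⟩ fun x hx hyS => ?_
  set y := homothety p τ x
  have hpy : dist p y = τ * dist p x := by
    rw [dist_center_homothety, Real.norm_of_nonneg hτ₀]
  have hpx : dist p x ≤ dist p y + diam S :=
    (dist_triangle p y x).trans (add_le_add_right (dist_le_diam_of_mem hSb hyS hx.1) _)
  -- `dist p y ≤ τ * (dist p y + diam S)` with `τ ≤ 1 / 2` forces `dist p y < ε`
  have hε := hpS y hyS
  nlinarith [mul_le_mul_of_nonneg_left hpx hτ₀,
    mul_nonneg (sub_nonneg.2 hτ) (dist_nonneg (x := p) (y := y))]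

theorem Convex.ofReal_pow_mul_measure_le_of_forall_le_dist {S T : Set E} {x : E} {ε τ : ℝ}
    (hS : Convex ℝ S) (hxS : x ∈ S) (hxT : ∀ t ∈ T, ε ≤ dist x t) (hSb : Bornology.IsBounded S)
    (hτ : τ ∈ Icc (0 : ℝ) 1) (hτS : τ * diam S < ε) :
    ENNReal.ofReal (τ ^ finrank ℝ E) * μ S ≤ μ (S \ T) := by
  refine hS.ofReal_pow_mul_measure_le_measure_diff μ hxS subset_rfl hτ fun s hs hyT => ?_
  have hxy : dist x (homothety x τ s) ≤ τ * diam S := by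
    rw [dist_center_homothety, Real.norm_of_nonneg hτ.1]
    exact mul_le_mul_of_nonneg_left (dist_le_diam_of_mem hSb hxS hs) hτ.1
  linarith [hxT _ hyT]

theorem Convex.exists_forall_subset_thickening_of_measure_symmDiff_le {S : Set E}
    (hS : Convex ℝ S) (hSb : Bornology.IsBounded S) (hS₀ : μ S ≠ 0) {ε : ℝ} (hε : 0 < ε) :
    ∃ δ > 0, ∀ T : Set E, Convex ℝ T → μ (T ∆ S) ≤ δ →
      T ⊆ Metric.thickening ε S ∧ S ⊆ Metric.thickening ε T := by
  have hD : 0 ≤ diam S := diam_nonneg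
  set τ := ε / (2 * (diam S + ε))
  have hτ₀ : 0 < τ := by positivity
  have hτ : τ ≤ 1 / 2 := by rw [div_le_iff₀ (by positivity)]; linarith
  have hτS : τ * diam S < ε / 2 := by
    rw [div_mul_eq_mul_div, div_lt_iff₀ (by positivity)]; nlinarith
  set c := ENNReal.ofReal (τ ^ finrank ℝ E)
  have hc₀ : c ≠ 0 := (ENNReal.ofReal_pos.2 (by positivity)).ne'
  have hc₁ : c ≤ 1 := ENNReal.ofReal_le_one.2 (pow_le_one₀ hτ₀.le (by linarith))
  have hS_top : μ S ≠ ⊤ := hSb.measure_lt_top.ne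
  have hthirds : μ S / 3 + μ S / 3 < μ S := calc
    _ < μ S / 3 + μ S / 3 + μ S / 3 :=
      ENNReal.lt_add_right (by finiteness) (ENNReal.div_pos hS₀ (by norm_num)).ne'
    _ = μ S := ENNReal.add_thirds _
  refine ⟨c * (μ S / 3), ENNReal.mul_pos hc₀ (ENNReal.div_pos hS₀ (by norm_num)).ne',
    fun T hT hTS => ⟨fun p hpT => ?_, fun x hxS => ?_⟩⟩
  · by_contra hpS
    simp only [mem_thickening_iff, not_exists, not_and, not_lt] at hpS
    have hinter : μ (S ∩ T) ≤ μ S / 3 := by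
      rw [← ENNReal.mul_le_mul_iff_right hc₀ ENNReal.ofReal_ne_top]
      exact (hT.ofReal_pow_mul_measure_inter_le_of_forall_le_dist μ hpT hpS hSb hτ₀.le hτ
        hτS).trans ((measure_mono le_sup_left).trans hTS)
    have hdiff : μ (S \ T) ≤ μ S / 3 :=
      ((measure_mono le_sup_right).trans hTS).trans (mul_le_of_le_one_left' hc₁)
    exact (measure_le_inter_add_sdiff μ S T).not_gt <|
      (add_le_add hinter hdiff).trans_lt hthirds
  · by_contra hxT
    simp only [mem_thickening_iff, not_exists, not_and, not_lt] at hxT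
    have : c * μ S < c * μ S := calc
      c * μ S ≤ μ (S \ T) := hS.ofReal_pow_mul_measure_le_of_forall_le_dist μ hxS hxT hSb
          ⟨hτ₀.le, by linarith⟩ (by linarith)
      _ ≤ c * (μ S / 3) := (measure_mono le_sup_right).trans hTS
      _ < c * μ S := by
        gcongr
        · exact ENNReal.ofReal_ne_top
        · exact le_self_add.trans_lt hthirds
    exact this.false

theorem convexHull_range_eq_of_tendsto_measure_symmDiff {ι : Type*} [Finite ι] {S : Set E}
    (hS : Convex ℝ S) (hSc : IsCompact S) (hS₀ : μ S ≠ 0) {w : ℕ → ι → E} {u : ι → E}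
    (hu : Tendsto w atTop (𝓝 u))
    (hw : Tendsto (fun n => μ (convexHull ℝ (range (w n)) ∆ S)) atTop (𝓝 0)) :
    convexHull ℝ (range u) = S := by
  set C := convexHull ℝ (range u)
  have hclose : ∀ ε > 0, C ⊆ cthickening (ε + ε) S ∧ S ⊆ cthickening (ε + ε) C := by
    intro ε hε
    obtain ⟨δ, hδ, hthick⟩ :=
      hS.exists_forall_subset_thickening_of_measure_symmDiff_le μ hSc.isBounded hS₀ hε
    have hwu : ∀ᶠ n in atTop, ∀ j, dist (w n j) (u j) ≤ ε :=
      eventually_all.2 fun j => (tendsto_pi_nhds.1 hu j).eventually (closedBall_mem_nhds _ hε)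
    obtain ⟨n, hn, hvol⟩ := (hwu.and (ENNReal.tendsto_nhds_zero.1 hw δ hδ)).exists
    obtain ⟨hTS, hST⟩ := hthick _ (convex_convexHull ℝ _) hvol
    have hTC := convexHull_range_subset_cthickening hn
    have hCT := convexHull_range_subset_cthickening fun j => (dist_comm _ _).trans_le (hn j)
    constructor
    · calc C ⊆ cthickening ε (convexHull ℝ (range (w n))) := hCT
        _ ⊆ cthickening ε (cthickening ε S) :=
          cthickening_subset_of_subset _ (hTS.trans (thickening_subset_cthickening _ _))
        _ ⊆ cthickening (ε + ε) S := cthickening_cthickening_subset hε.le hε.le _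
    · calc S ⊆ cthickening ε (convexHull ℝ (range (w n))) :=
          hST.trans (thickening_subset_cthickening _ _)
        _ ⊆ cthickening ε (cthickening ε C) := cthickening_subset_of_subset _ hTC
        _ ⊆ cthickening (ε + ε) C := cthickening_cthickening_subset hε.le hε.le _
  have hclose' : ∀ ε > 0, C ⊆ cthickening ε S ∧ S ⊆ cthickening ε C := fun ε hε => by
    simpa only [add_halves] using hclose (ε / 2) (half_pos hε)
  refine Subset.antisymm ?_ ?_
  · exact (subset_closure_of_forall_subset_cthickening fun ε hε => (hclose' ε hε).1).trans_eq
      hSc.isClosed.closure_eq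
  · exact (subset_closure_of_forall_subset_cthickening fun ε hε => (hclose' ε hε).2).trans_eq
      ((finite_range u).isClosed_convexHull ℝ).closure_eq

theorem exists_subseq_tendsto_convexHull_range_eq {ι : Type*} [Finite ι] {S : Set E}
    (hS : Convex ℝ S) (hSc : IsCompact S) (hS₀ : μ S ≠ 0) {w : ℕ → ι → E}
    (hw : Tendsto (fun n => μ (convexHull ℝ (range (w n)) ∆ S)) atTop (𝓝 0)) :
    ∃ u : ι → E, ∃ φ : ℕ → ℕ, StrictMono φ ∧ Tendsto (w ∘ φ) atTop (𝓝 u) ∧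
      convexHull ℝ (range u) = S := by
  obtain ⟨δ, hδ, hthick⟩ :=
    hS.exists_forall_subset_thickening_of_measure_symmDiff_le μ hSc.isBounded hS₀ one_pos
  have hbdd : ∀ᶠ n in atTop, w n ∈ univ.pi fun _ => cthickening 1 S :=
    (ENNReal.tendsto_nhds_zero.1 hw δ hδ).mono fun n hn j _ =>
      thickening_subset_cthickening _ _ <|
        (hthick _ (convex_convexHull ℝ _) hn).1 (subset_convexHull ℝ _ (mem_range_self j))
  obtain ⟨u, -, φ, hφ, hu⟩ :=
    (isCompact_univ_pi fun _ => hSc.cthickening).tendsto_subseq' hbdd.frequently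
  exact ⟨u, φ, hφ, hu,
    convexHull_range_eq_of_tendsto_measure_symmDiff μ hS hSc hS₀ hu (hw.comp hφ.tendsto_atTop)⟩

end

theorem exists_perm_apply_eq_of_convexHull_range_eq {𝕜 E ι : Type*} [Field 𝕜] [LinearOrder 𝕜]
    [IsStrictOrderedRing 𝕜] [AddCommGroup E] [Module 𝕜 E] [Finite ι] {u v : ι → E}
    (hv : Function.Injective v) (hext : ∀ i, v i ∈ (convexHull 𝕜 (range v)).extremePoints 𝕜)
    (huv : convexHull 𝕜 (range u) = convexHull 𝕜 (range v)) :
    ∃ σ : Equiv.Perm ι, ∀ i, u (σ i) = v i := by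
  choose σ hσ using fun i => extremePoints_convexHull_subset (huv ▸ hext i : v i ∈ _)
  have hσ_inj : Function.Injective σ := fun i i' h => hv (by rw [← hσ i, ← hσ i', h])
  exact ⟨Equiv.ofBijective σ (Finite.injective_iff_bijective.1 hσ_inj), hσ⟩

/-- If `v_1, …, v_k` are distinct points of `ℝ^d` whose convex hull
`S` has nonempty interior and each `v_i` is an extreme point of `S`, then for
every `Δ > 0` there is `δ > 0` such that whenever the convex hull `T` of points
`w_1, …, w_k` satisfies `λ(T Δ S) ≤ δ`, there is a permutation `ρ` with
`‖w_{ρ(i)} − v_i‖ ≤ Δ` for all `i`. -/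
theorem stmt17 {d k : ℕ} (v : Fin k → EuclideanSpace ℝ (Fin d))
    (hinj : Function.Injective v)
    (hint : (interior (convexHull ℝ (Set.range v))).Nonempty)
    (hext : ∀ i, v i ∈ Set.extremePoints ℝ (convexHull ℝ (Set.range v))) :
    ∀ Δ : ℝ, 0 < Δ → ∃ δ : ℝ, 0 < δ ∧
      ∀ w : Fin k → EuclideanSpace ℝ (Fin d),
        volume ((convexHull ℝ (Set.range w) \ convexHull ℝ (Set.range v)) ∪
            (convexHull ℝ (Set.range v) \ convexHull ℝ (Set.range w))) ≤
          ENNReal.ofReal δ →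
        ∃ ρ : Equiv.Perm (Fin k), ∀ i, ‖w (ρ i) - v i‖ ≤ Δ := by
  intro Δ hΔ
  by_contra! hbad
  choose w hw hfar using fun n : ℕ => hbad (1 / ((n : ℝ) + 1)) Nat.one_div_pos_of_nat
  set S := convexHull ℝ (range v)
  have hS₀ : volume S ≠ 0 :=
    ((isOpen_interior.measure_pos volume hint).trans_le (measure_mono interior_subset)).ne'
  have hvol : Tendsto (fun n => volume (convexHull ℝ (range (w n)) ∆ S)) atTop (𝓝 0) := by
    have h := ENNReal.tendsto_ofReal tendsto_one_div_add_atTop_nhds_zero_nat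
    rw [ENNReal.ofReal_zero] at h
    exact tendsto_of_tendsto_of_tendsto_of_le_of_le tendsto_const_nhds h (fun _ => zero_le) hw
  obtain ⟨u, φ, -, hu, huS⟩ := exists_subseq_tendsto_convexHull_range_eq volume
    (convex_convexHull ℝ _) ((finite_range v).isCompact_convexHull ℝ) hS₀ hvol
  obtain ⟨σ, hσ⟩ := exists_perm_apply_eq_of_convexHull_range_eq hinj hext huS
  have hnear : ∀ᶠ n in atTop, ∀ i, dist (w (φ n) (σ i)) (v i) < Δ :=
    eventually_all.2 fun i => hσ i ▸ (tendsto_pi_nhds.1 hu (σ i)).eventually (ball_mem_nhds _ hΔ)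
  obtain ⟨n, hn⟩ := hnear.exists
  obtain ⟨i, hi⟩ := hfar (φ n) σ
  exact hi.not_ge ((dist_eq_norm _ _).symm.trans_le (hn i).le)
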